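/- arXiv:1401.1671 — 5 statements merged into one kernel-verified Lean document; each statement's English description precedes it below -/
import Mathlib

section
/- Let M(i) be the (non-maximal) matching held by the fast matching algorithm at iteration i, and define D_l(i) = {v ∈ V : h_v(i) ≥ l}. If v_0 ∈ D_l(i) with l ≥ 1 and (u, v_0) ∈ M(i), then every neighbor of u lies in D_{l-1}(i), i.e., n_u ⊆ D_{l-1}(i). -/
/-- State of the fast matching algorithm on a bipartite graph with left and right
vertex sets `Fin N`: a partial matching (each left vertex is matched to at most one
right vertex) and a counter `h v` for each right vertex `v`. -/
structure FMState (N : ℕ) where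
  matching : Fin N → Option (Fin N)
  h : Fin N → ℕ

/-- Initial state: empty matching, all counters zero. -/
def FMInit (N : ℕ) : FMState N := ⟨fun _ => none, fun _ => 0⟩

/-- One iteration of the fast matching algorithm for the bipartite graph with edge
relation `E`: a free left vertex `u` is matched to a neighbor `j` whose counter is
minimal among `u`'s neighbors; the previous partner of `j` (if any) becomes free,
and the counter of `j` is incremented. -/
def FMStep {N : ℕ} (E : Fin N → Fin N → Prop) (s s' : FMState N) : Prop :=
  ∃ u j, s.matching u = none ∧ E u j ∧ (∀ k, E u k → s.h j ≤ s.h k) ∧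
    s'.h = Function.update s.h j (s.h j + 1) ∧
    s'.matching = fun u' => if u' = u then some j
      else if s.matching u' = some j then none else s.matching u'

/-- `m` is a (partial) matching of the bipartite graph `E`: matched pairs are edges
and no right vertex is matched to two left vertices. -/
def IsMatching {N : ℕ} (E : Fin N → Fin N → Prop) (m : Fin N → Option (Fin N)) : Prop :=
  (∀ u j, m u = some j → E u j) ∧ ∀ u u' j, m u = some j → m u' = some j → u = u'

/-- An augmenting path of length `2k+1` (edges) with respect to the matching `m`,
given by left vertices `u 0, …, u k` and right vertices `v 0, …, v k`:
it starts at the free vertex `u 0`, the edges `(u i, v i)` are in the graph,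
the edges `(u (i+1), v i)` are matched, it ends at the free right vertex `v k`,
and all vertices along the path are distinct. -/
def AugPath {N : ℕ} (E : Fin N → Fin N → Prop) (m : Fin N → Option (Fin N)) (k : ℕ)
    (u v : ℕ → Fin N) : Prop :=
  m (u 0) = none ∧
  (∀ i ≤ k, E (u i) (v i)) ∧
  (∀ i < k, m (u (i + 1)) = some (v i)) ∧
  (∀ u', m u' ≠ some (v k)) ∧
  (∀ i ≤ k, ∀ j ≤ k, u i = u j → i = j) ∧
  (∀ i ≤ k, ∀ j ≤ k, v i = v j → i = j)

theorem fm_aux {N : ℕ} (E : Fin N → Fin N → Prop) (run : ℕ → FMState N)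
    (h0 : run 0 = FMInit N) :
    ∀ i, (∀ i' < i, FMStep E (run i') (run (i' + 1))) →
      ∀ u v0, (run i).matching u = some v0 →
        ∀ v, E u v → (run i).h v0 ≤ (run i).h v + 1 := by
  intro i
  induction i with
  | zero =>
    intro _ u v0 hm
    rw [h0] at hm
    simp [FMInit] at hm
  | succ n ih =>
    intro hstep u v0 hm v hEv
    obtain ⟨u1, j, hfree, hEuj, hmin, hh, hmat⟩ := hstep n (Nat.lt_succ_self n)
    have ihn := ih (fun i' hi' => hstep i' (Nat.lt_succ_of_lt hi'))
    rw [hmat] at hm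
    rw [hh]
    by_cases hu : u = u1
    · subst hu
      simp at hm
      subst hm
      have := hmin v hEv
      simp [Function.update_apply]
      split <;> omega
    · simp [hu] at hm
      obtain ⟨hj, hm⟩ := hm
      have hne : v0 ≠ j := by
        intro h; rw [h] at hm; exact hj hm
      have := ihn u v0 hm v hEv
      rcases eq_or_ne v j with rfl | hvj
      · simp [Function.update_apply, hne]; omega
      · simp [Function.update_apply, hne, hvj]; omega

/-- If at iteration `i` of the fast matching algorithm `u` is matched to `v₀` and
`h_{v₀}(i) ≥ l ≥ 1`, then every neighbor of `u` lies in `D_{l-1}(i)`, i.e. has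
counter at least `l - 1`. -/
theorem stmt9 {N : ℕ} (E : Fin N → Fin N → Prop) (run : ℕ → FMState N)
    (h0 : run 0 = FMInit N) (i : ℕ)
    (hstep : ∀ i' < i, FMStep E (run i') (run (i' + 1)))
    (u v0 : Fin N) (l : ℕ) (hl : 1 ≤ l)
    (hm : (run i).matching u = some v0) (hv0 : l ≤ (run i).h v0) :
    ∀ v, E u v → l - 1 ≤ (run i).h v := by
  intro v hEv
  have := fm_aux E run h0 i hstep u v0 hm v hEv
  omega
end

section
/- Let M(i) be a non-maximal matching obtained by the fast matching algorithm at iteration i, and let u_0 ∈ U be free with n_{u_0} ⊆ D_l(i) = {v : h_v(i) ≥ l}. Then every augmenting path in G with respect to M(i) starting from u_0 has length at least 2l + 1. -/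
/-- Invariant maintained by the algorithm. -/
def FMInv {N : ℕ} (E : Fin N → Fin N → Prop) (s : FMState N) : Prop :=
  (∀ u v, s.matching u = some v → ∀ w, E u w → s.h v ≤ s.h w + 1) ∧
  (∀ v, 0 < s.h v → ∃ u, s.matching u = some v)

lemma FMInv_step {N : ℕ} (E : Fin N → Fin N → Prop) (s s' : FMState N)
    (hinv : FMInv E s) (hs : FMStep E s s') : FMInv E s' := by
  obtain ⟨u₀, j, hfree, hEj, hmin, hh, hm⟩ := hs
  obtain ⟨h1, h2⟩ := hinv
  constructor
  · intro u v huv w hEw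
    rw [hm] at huv
    simp only at huv
    by_cases hu : u = u₀
    · rw [if_pos hu] at huv
      obtain rfl : j = v := by injection huv
      subst hu
      rw [hh]
      by_cases hw : w = j
      · subst hw; simp [Function.update]
      · simp [Function.update, hw]
        exact hmin w hEw
    · rw [if_neg hu] at huv
      by_cases hj : s.matching u = some j
      · rw [if_pos hj] at huv; exact absurd huv (by simp)
      · rw [if_neg hj] at huv
        have hvj : v ≠ j := fun h => hj (h ▸ huv)
        rw [hh]
        have := h1 u v huv w hEw
        by_cases hw : w = j
        · subst hw; simp [Function.update, hvj]; omega
        · simp [Function.update, hvj, hw]; exact this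
  · intro v hv
    by_cases hvj : v = j
    · subst hvj
      exact ⟨u₀, by rw [hm]; simp⟩
    · rw [hh] at hv
      simp [Function.update, hvj] at hv
      obtain ⟨u, hu⟩ := h2 v hv
      refine ⟨u, ?_⟩
      rw [hm]
      have hu0 : u ≠ u₀ := fun h => by rw [h, hfree] at hu; exact absurd hu (by simp)
      have : s.matching u ≠ some j := by rw [hu]; simp [hvj]
      simp [hu0, this, hu, hvj]

lemma FMInv_run {N : ℕ} (E : Fin N → Fin N → Prop) (run : ℕ → FMState N)
    (h0 : run 0 = FMInit N) (i : ℕ)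
    (hstep : ∀ i' < i, FMStep E (run i') (run (i' + 1))) : FMInv E (run i) := by
  induction i with
  | zero => rw [h0]; exact ⟨fun u v h _ _ => by simp [FMInit] at h, fun v h => by simp [FMInit] at h⟩
  | succ n ih =>
    exact FMInv_step E _ _ (ih (fun i' hi' => hstep i' (Nat.lt_succ_of_lt hi')))
      (hstep n (Nat.lt_succ_self n))

/-- If at iteration `i` the left vertex `u₀` is free and all its neighbors have counter
at least `l`, then every augmenting path with respect to the current matching starting
at `u₀` has length at least `2l + 1`, i.e. `k ≥ l`. -/
theorem stmt10 {N : ℕ} (E : Fin N → Fin N → Prop) (run : ℕ → FMState N)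
    (h0 : run 0 = FMInit N) (i : ℕ)
    (hstep : ∀ i' < i, FMStep E (run i') (run (i' + 1)))
    (u0 : Fin N) (l : ℕ)
    (hfree : (run i).matching u0 = none)
    (hD : ∀ v, E u0 v → l ≤ (run i).h v)
    (k : ℕ) (u v : ℕ → Fin N)
    (hpath : AugPath E (run i).matching k u v) (hu0 : u 0 = u0) :
    l ≤ k := by
  obtain ⟨inv1, inv2⟩ := FMInv_run E run h0 i hstep
  obtain ⟨-, hedge, hmatch, hlast, -, -⟩ := hpath
  have hvk : (run i).h (v k) = 0 := by
    by_contra h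
    obtain ⟨u', hu'⟩ := inv2 (v k) (Nat.pos_of_ne_zero h)
    exact hlast u' hu'
  have key : ∀ m ≤ k, l ≤ (run i).h (v m) + m := by
    intro m hm
    induction m with
    | zero => simpa using hD (v 0) (hu0 ▸ hedge 0 (Nat.zero_le k))
    | succ n ihn =>
      have h1 := ihn (Nat.le_of_succ_le hm)
      have h2 := inv1 (u (n + 1)) (v n) (hmatch n hm) (v (n + 1))
        (hedge (n + 1) hm)
      omega
  have := key k le_rfl
  omega
end

section
/- Let G = (U, V, E) be a bipartite graph with |U| = |V| = N containing a perfect matching, and suppose that for every non-perfect matching M ⊆ E there exists an augmenting path of length at most 2l + 1. Then at every iteration i of the fast matching algorithm, every free vertex u ∈ U has at least one neighbor j ∈ n_u with h_j(i) ≤ l. -/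
section Augmentation

variable {N : ℕ} {E : Fin N → Fin N → Prop} {m : Fin N → Option (Fin N)}

def pathLeft (k : ℕ) (u : ℕ → Fin N) : Finset (Fin N) := (Finset.range (k + 1)).image u

lemma mem_pathLeft {k : ℕ} {u : ℕ → Fin N} {x : Fin N} :
    x ∈ pathLeft k u ↔ ∃ i ≤ k, u i = x := by
  simp [pathLeft]

lemma card_pathLeft_le (k : ℕ) (u : ℕ → Fin N) : (pathLeft k u).card ≤ k + 1 :=
  Finset.card_image_le.trans (Finset.card_range _).le

lemma AugPath.card_pathLeft {k : ℕ} {u v : ℕ → Fin N} (hP : AugPath E m k u v) :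
    (pathLeft k u).card = k + 1 := by
  rw [pathLeft, Finset.card_image_of_injOn, Finset.card_range]
  intro a ha b hb hab
  simp only [Finset.coe_range, Set.mem_Iio] at ha hb
  exact hP.2.2.2.2.1 a (by omega) b (by omega) hab

def freeLeft (m : Fin N → Option (Fin N)) : Finset (Fin N) := Finset.univ.filter (m · = none)

noncomputable def augment (m : Fin N → Option (Fin N)) (k : ℕ) (u v : ℕ → Fin N) :
    Fin N → Option (Fin N) :=
  fun x => if h : ∃ i ≤ k, u i = x then some (v h.choose) else m x

variable {k : ℕ} {pu pv : ℕ → Fin N}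

lemma AugPath.augment_apply (hP : AugPath E m k pu pv) {i : ℕ} (hi : i ≤ k) :
    augment m k pu pv (pu i) = some (pv i) := by
  have h : ∃ j ≤ k, pu j = pu i := ⟨i, hi, rfl⟩
  rw [augment, dif_pos h, hP.2.2.2.2.1 _ h.choose_spec.1 _ hi h.choose_spec.2]

lemma augment_apply_of_notMem {x : Fin N} (hx : x ∉ pathLeft k pu) :
    augment m k pu pv x = m x :=
  dif_neg (mt mem_pathLeft.mpr hx)

lemma AugPath.notMem_pathLeft (hP : AugPath E m k pu pv) {x : Fin N} (hx : m x = none)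
    (hx0 : pu 0 ≠ x) : x ∉ pathLeft k pu := by
  rw [mem_pathLeft]
  rintro ⟨_ | i, hi, rfl⟩
  · exact hx0 rfl
  · simp [hP.2.2.1 i (by omega)] at hx

lemma AugPath.mem_pathLeft_of_apply_eq (hm : IsMatching E m) (hP : AugPath E m k pu pv)
    {x : Fin N} {i : ℕ} (hi : i ≤ k) (hx : m x = some (pv i)) : x ∈ pathLeft k pu := by
  rcases hi.lt_or_eq with hi | rfl
  · exact mem_pathLeft.mpr ⟨i + 1, hi, (hm.2 _ _ _ hx (hP.2.2.1 i hi)).symm⟩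
  · exact absurd hx (hP.2.2.2.1 x)

lemma AugPath.augment_eq_some (hP : AugPath E m k pu pv) {x j : Fin N}
    (h : augment m k pu pv x = some j) :
    (∃ i ≤ k, pu i = x ∧ pv i = j) ∨ (x ∉ pathLeft k pu ∧ m x = some j) := by
  by_cases hx : x ∈ pathLeft k pu
  · obtain ⟨i, hi, rfl⟩ := mem_pathLeft.mp hx
    rw [hP.augment_apply hi] at h
    exact .inl ⟨i, hi, rfl, Option.some_inj.mp h⟩
  · rw [augment_apply_of_notMem hx] at h
    exact .inr ⟨hx, h⟩

lemma IsMatching.augment (hm : IsMatching E m) (hP : AugPath E m k pu pv) :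
    IsMatching E (augment m k pu pv) := by
  refine ⟨fun x j h => ?_, fun x x' j h h' => ?_⟩
  · rcases hP.augment_eq_some h with ⟨i, hi, rfl, rfl⟩ | ⟨-, h⟩
    exacts [hP.2.1 i hi, hm.1 _ _ h]
  · rcases hP.augment_eq_some h with ⟨i, hi, rfl, rfl⟩ | ⟨hx, h⟩ <;>
      rcases hP.augment_eq_some h' with ⟨i', hi', rfl, hii'⟩ | ⟨hx', h'⟩
    · rw [hP.2.2.2.2.2 i hi i' hi' hii'.symm]
    · exact absurd (hP.mem_pathLeft_of_apply_eq hm hi h') hx'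
    · exact absurd (hP.mem_pathLeft_of_apply_eq hm hi' (hii' ▸ h)) hx
    · exact hm.2 _ _ _ h h'

lemma AugPath.isSome_augment (hP : AugPath E m k pu pv) {x : Fin N} (hx : (m x).isSome) :
    (augment m k pu pv x).isSome := by
  by_cases hmem : x ∈ pathLeft k pu
  · obtain ⟨i, hi, rfl⟩ := mem_pathLeft.mp hmem
    simp [hP.augment_apply hi]
  · rwa [augment_apply_of_notMem hmem]

lemma AugPath.freeLeft_augment_ssubset (hP : AugPath E m k pu pv) :
    freeLeft (augment m k pu pv) ⊂ freeLeft m := by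
  refine Finset.ssubset_iff_of_subset (fun x hx => ?_) |>.mpr ⟨pu 0, ?_, ?_⟩
  · simp only [freeLeft, Finset.mem_filter, Finset.mem_univ, true_and] at hx ⊢
    by_contra hmx
    simpa [hx] using hP.isSome_augment (Option.ne_none_iff_isSome.mp hmx)
  · simp [freeLeft, hP.1]
  · simp [freeLeft, hP.augment_apply (Nat.zero_le k)]

end Augmentation

section SymmetricDifference

variable {N : ℕ} {E : Fin N → Fin N → Prop} {m m' : Fin N → Option (Fin N)} {z : Fin N}

/-- Leave a left vertex along its `m'`-edge and come back along an `m`-edge: this traces the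
component of `m Δ m'` that starts at `z`. -/
noncomputable def altWalk (m m' : Fin N → Option (Fin N)) (z : Fin N) : ℕ → Fin N
  | 0 => z
  | t + 1 => if h : ∃ x, m x = m' (altWalk m m' z t) then h.choose else z

lemma altWalk_succ {t : ℕ} (h : ∃ x, m x = m' (altWalk m m' z t)) :
    m (altWalk m m' z (t + 1)) = m' (altWalk m m' z t) := by
  rw [altWalk, dif_pos h]
  exact h.choose_spec

lemma isSome_altWalk (hcover : ∀ x, (m x).isSome → (m' x).isSome) (hz' : (m' z).isSome)
    {t : ℕ} (ht : ∀ s < t, ∃ x, m x = m' (altWalk m m' z s)) :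
    (m' (altWalk m m' z t)).isSome := by
  induction t with
  | zero => exact hz'
  | succ t ih =>
    refine hcover _ ?_
    rw [altWalk_succ (ht t t.lt_succ_self)]
    exact ih fun s hs => ht s (by omega)

lemma altWalk_injOn (hm' : IsMatching E m') (hcover : ∀ x, (m x).isSome → (m' x).isSome)
    (hz : m z = none) (hz' : (m' z).isSome) {t : ℕ}
    (ht : ∀ s < t, ∃ x, m x = m' (altWalk m m' z s)) {a b : ℕ} (ha : a ≤ t) (hb : b ≤ t)
    (hab : altWalk m m' z a = altWalk m m' z b) : a = b := by
  have hsome : ∀ s < t, (m (altWalk m m' z (s + 1))).isSome := fun s hs => by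
    rw [altWalk_succ (ht s hs)]
    exact isSome_altWalk hcover hz' fun r hr => ht r (by omega)
  induction a generalizing b with
  | zero =>
    cases b with
    | zero => rfl
    | succ b => simpa [← hab, altWalk.eq_1, hz] using hsome b hb
  | succ a ih =>
    cases b with
    | zero => simpa [hab, altWalk.eq_1, hz] using hsome a ha
    | succ b =>
      have hmate : m' (altWalk m m' z a) = m' (altWalk m m' z b) := by
        rw [← altWalk_succ (ht a ha), ← altWalk_succ (ht b hb), hab]
      obtain ⟨j, hj⟩ := Option.isSome_iff_exists.mp
        (isSome_altWalk hcover hz' fun r (hr : r < a) => ht r (by omega))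
      rw [ih (by omega) (by omega) (hm'.2 _ _ _ hj (hmate ▸ hj))]

theorem exists_augPath_altWalk (hm' : IsMatching E m')
    (hcover : ∀ x, (m x).isSome → (m' x).isSome) (hz : m z = none) (hz' : (m' z).isSome) :
    ∃ T V, AugPath E m T (altWalk m m' z) V ∧ ∀ t ≤ T, m' (altWalk m m' z t) = some (V t) := by
  have hend : ∃ T, ∀ x, m x ≠ m' (altWalk m m' z T) := by
    by_contra! hall
    exact not_injective_infinite_finite (altWalk m m' z) fun a b hab =>
      altWalk_injOn hm' hcover hz hz' (fun s _ => hall s) (le_max_left a b) (le_max_right a b) hab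
  set T := Nat.find hend
  have hgood : ∀ s < T, ∃ x, m x = m' (altWalk m m' z s) := fun s hs => by
    simpa using Nat.find_min hend hs
  have hV : ∀ t ≤ T, m' (altWalk m m' z t) = some ((m' (altWalk m m' z t)).getD z) :=
    fun t ht => (Option.getD_of_ne_none (Option.isSome_iff_ne_none.mp
      (isSome_altWalk hcover hz' fun s hs => hgood s (by omega))) z).symm
  have hinj : ∀ a ≤ T, ∀ b ≤ T, altWalk m m' z a = altWalk m m' z b → a = b :=
    fun a ha b hb => altWalk_injOn hm' hcover hz hz' hgood ha hb
  refine ⟨T, _, ⟨hz, fun i hi => hm'.1 _ _ (hV i hi),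
    fun i hi => (altWalk_succ (hgood i hi)).trans (hV i hi.le),
    fun x => hV T le_rfl ▸ Nat.find_spec hend x, hinj, fun a ha b hb hab => ?_⟩, hV⟩
  refine hinj a ha b hb (hm'.2 _ _ _ (hV a ha) ?_)
  rw [hab]
  exact hV b hb

end SymmetricDifference

section Exchange

variable {N : ℕ} {E : Fin N → Fin N → Prop} {m m' : Fin N → Option (Fin N)}
  {T T' : ℕ} {X V Y W : ℕ → Fin N}

lemma AugPath.pathLeft_subset (hR : AugPath E m T X V) (hRm' : ∀ t ≤ T, m' (X t) = some (V t))
    {s : Finset (Fin N)} (hs : ∀ x, m' x ≠ m x → x ∈ s) : pathLeft T X ⊆ s := by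
  intro x hx
  obtain ⟨t, ht, rfl⟩ := mem_pathLeft.mp hx
  refine hs _ ?_
  rw [hRm' t ht]
  cases t with
  | zero => simp [hR.1]
  | succ t =>
    rw [hR.2.2.1 t (by omega), Ne, Option.some_inj]
    exact fun h => by simpa using hR.2.2.2.2.2 _ ht _ (by omega) h

lemma AugPath.disjoint_pathLeft (hm' : IsMatching E m') (hR : AugPath E m T X V)
    (hRm' : ∀ t ≤ T, m' (X t) = some (V t)) (hR' : AugPath E m T' Y W)
    (hR'm' : ∀ t ≤ T', m' (Y t) = some (W t)) (hXY : X 0 ≠ Y 0) :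
    Disjoint (pathLeft T X) (pathLeft T' Y) := by
  suffices h : ∀ a ≤ T, ∀ b ≤ T', X a ≠ Y b by
    rw [Finset.disjoint_left]
    intro x hx hx'
    obtain ⟨a, ha, rfl⟩ := mem_pathLeft.mp hx
    obtain ⟨b, hb, hab⟩ := mem_pathLeft.mp hx'
    exact h a ha b hb hab.symm
  intro a
  induction a with
  | zero =>
    rintro - (_ | b) hb hab
    · exact hXY hab
    · simpa [← hab, hR.1] using hR'.2.2.1 b hb
  | succ a ih =>
    rintro ha (_ | b) hb hab
    · simpa [hab, hR'.1] using hR.2.2.1 a ha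
    · have hVW : V a = W b := Option.some_inj.mp <|
        (hR.2.2.1 a ha).symm.trans (hab ▸ hR'.2.2.1 b hb)
      exact ih (by omega) b (by omega) <|
        hm'.2 _ _ _ (hRm' a (by omega)) (hVW ▸ hR'm' b (by omega))

theorem AugPath.exists_augPath_from_of_augment {kP kQ : ℕ} {pu pv qu qv : ℕ → Fin N} {u : Fin N}
    (hm : IsMatching E m) (hP : AugPath E m kP pu pv)
    (hPmin : ∀ k X V, AugPath E m k X V → kP ≤ k) (hu : m u = none) (hPu : pu 0 ≠ u)
    (hQ : AugPath E (augment m kP pu pv) kQ qu qv) (hQu : qu 0 = u) :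
    ∃ T ≤ kQ, ∃ X V, AugPath E m T X V ∧ X 0 = u := by
  set m' := augment (augment m kP pu pv) kQ qu qv
  have hm' : IsMatching E m' := (hm.augment hP).augment hQ
  have hcover : ∀ x, (m x).isSome → (m' x).isSome :=
    fun x hx => hQ.isSome_augment (hP.isSome_augment hx)
  have hu' : (m' u).isSome := by simp [m', ← hQu, hQ.augment_apply (Nat.zero_le kQ)]
  have hPu' : (m' (pu 0)).isSome :=
    hQ.isSome_augment (by simp [hP.augment_apply (Nat.zero_le kP)])
  obtain ⟨T, V, hR, hRm'⟩ := exists_augPath_altWalk hm' hcover hu hu'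
  obtain ⟨T', W, hR', hR'm'⟩ := exists_augPath_altWalk hm' hcover hP.1 hPu'
  have hchanged : ∀ x, m' x ≠ m x → x ∈ pathLeft kP pu ∪ pathLeft kQ qu := by
    intro x hx
    by_contra hnot
    rw [Finset.mem_union, not_or] at hnot
    exact hx ((augment_apply_of_notMem hnot.2).trans (augment_apply_of_notMem hnot.1))
  have hcard := Finset.card_le_card <|
    Finset.union_subset (hR.pathLeft_subset hRm' hchanged) (hR'.pathLeft_subset hR'm' hchanged)
  rw [Finset.card_union_of_disjoint (hR.disjoint_pathLeft hm' hRm' hR' hR'm' hPu.symm),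
    hR.card_pathLeft, hR'.card_pathLeft] at hcard
  have hPQ := (Finset.card_union_le (pathLeft kP pu) (pathLeft kQ qu)).trans
    (add_le_add (card_pathLeft_le kP pu) (card_pathLeft_le kQ qu))
  have hPR' := hPmin _ _ _ hR'
  exact ⟨T, by omega, _, V, hR, rfl⟩

theorem exists_augPath_from {l : ℕ}
    (haug : ∀ m, IsMatching E m → ¬(∀ u, (m u).isSome) → ∃ k ≤ l, ∃ u v, AugPath E m k u v)
    (hm : IsMatching E m) {u : Fin N} (hu : m u = none) :
    ∃ k ≤ l, ∃ X V, AugPath E m k X V ∧ X 0 = u := by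
  classical
  induction hn : (freeLeft m).card using Nat.strong_induction_on generalizing m with
  | _ n ih =>
  obtain ⟨k₀, hk₀, pu₀, pv₀, hP₀⟩ := haug m hm fun h => by simpa [hu] using h u
  have hex : ∃ k, ∃ X V, AugPath E m k X V := ⟨k₀, pu₀, pv₀, hP₀⟩
  obtain ⟨pu, pv, hP⟩ := Nat.find_spec hex
  have hPmin : ∀ k X V, AugPath E m k X V → Nat.find hex ≤ k :=
    fun k X V h => Nat.find_min' hex ⟨X, V, h⟩
  by_cases hPu : pu 0 = u
  · exact ⟨_, (hPmin _ _ _ hP₀).trans hk₀, pu, pv, hP, hPu⟩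
  obtain ⟨kQ, hkQ, qu, qv, hQ, hQu⟩ :=
    ih _ (hn ▸ Finset.card_lt_card hP.freeLeft_augment_ssubset) (hm.augment hP)
      ((augment_apply_of_notMem (hP.notMem_pathLeft hu hPu)).trans hu) rfl
  obtain ⟨T, hT, X, V, hR, hXu⟩ := hP.exists_augPath_from_of_augment hm hPmin hu hPu hQ hQu
  exact ⟨T, hT.trans hkQ, X, V, hR, hXu⟩

end Exchange

section Algorithm

variable {N : ℕ} {E : Fin N → Fin N → Prop}

structure FMInvariant (E : Fin N → Fin N → Prop) (s : FMState N) : Prop where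
  isMatching : IsMatching E s.matching
  h_eq_zero_of_free : ∀ v, (∀ x, s.matching x ≠ some v) → s.h v = 0
  h_le_succ : ∀ x v w, s.matching x = some v → E x w → s.h v ≤ s.h w + 1

lemma IsMatching.fmStep {s s' : FMState N} (hs : IsMatching E s.matching)
    (hstep : FMStep E s s') : IsMatching E s'.matching := by
  obtain ⟨u, j, -, huj, -, -, hm⟩ := hstep
  obtain ⟨hedge, hinj⟩ := hs
  rw [hm]
  exact ⟨fun x v hxv => by grind, fun x x' v hx hx' => by grind⟩

lemma FMInvariant.fmStep {s s' : FMState N} (hs : FMInvariant E s) (hstep : FMStep E s s') :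
    FMInvariant E s' := by
  refine ⟨hs.isMatching.fmStep hstep, ?_, ?_⟩ <;>
    obtain ⟨u, j, hu, -, hmin, hh, hm⟩ := hstep
  · have := hs.h_eq_zero_of_free
    rw [hh, hm]
    grind
  · -- `u`'s new partner `j` had minimum counter among its neighbours, and only `j`'s counter grows
    have := hs.h_le_succ
    rw [hh, hm]
    grind

lemma fmInvariant_run (run : ℕ → FMState N) (h0 : run 0 = FMInit N) {i : ℕ}
    (hstep : ∀ i' < i, FMStep E (run i') (run (i' + 1))) : FMInvariant E (run i) := by
  induction i with
  | zero =>
    rw [h0]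
    exact ⟨⟨by simp [FMInit], by simp [FMInit]⟩, fun _ _ => rfl, by simp [FMInit]⟩
  | succ i ih =>
    exact (ih fun i' hi' => hstep i' (by omega)).fmStep (hstep i (by omega))

lemma FMInvariant.h_le_of_augPath {s : FMState N} (hs : FMInvariant E s) {k : ℕ}
    {X V : ℕ → Fin N} (hP : AugPath E s.matching k X V) : s.h (V 0) ≤ k := by
  suffices h : ∀ d ≤ k, s.h (V (k - d)) ≤ d by simpa using h k le_rfl
  intro d hd
  induction d with
  | zero => exact (hs.h_eq_zero_of_free _ hP.2.2.2.1).le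
  | succ d ih =>
    have hslack := hs.h_le_succ _ _ _ (hP.2.2.1 (k - (d + 1)) (by omega))
      (hP.2.1 (k - (d + 1) + 1) (by omega))
    rw [show k - (d + 1) + 1 = k - d by omega] at hslack
    have := ih (by omega)
    omega

end Algorithm

theorem stmt11_general {N : ℕ} (E : Fin N → Fin N → Prop) (l : ℕ)
    (haug : ∀ m, IsMatching E m → ¬(∀ u, (m u).isSome) →
      ∃ k ≤ l, ∃ u v, AugPath E m k u v)
    (run : ℕ → FMState N) (h0 : run 0 = FMInit N) (i : ℕ)
    (hstep : ∀ i' < i, FMStep E (run i') (run (i' + 1)))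
    (u : Fin N) (hu : (run i).matching u = none) :
    ∃ j, E u j ∧ (run i).h j ≤ l := by
  have hs : FMInvariant E (run i) := fmInvariant_run run h0 hstep
  obtain ⟨k, hkl, X, V, hP, rfl⟩ := exists_augPath_from haug hs.isMatching hu
  exact ⟨V 0, hP.2.1 0 k.zero_le, (hs.h_le_of_augPath hP).trans hkl⟩

/-- If `G` contains a perfect matching and every non-perfect matching admits an
augmenting path of length at most `2l + 1`, then at every iteration of the fast
matching algorithm every free left vertex has a neighbor with counter at most `l`. -/
theorem stmt11 {N : ℕ} (E : Fin N → Fin N → Prop) (l : ℕ)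
    (hpm : ∃ m, IsMatching E m ∧ ∀ u, (m u).isSome)
    (haug : ∀ m, IsMatching E m → ¬(∀ u, (m u).isSome) →
      ∃ k ≤ l, ∃ u v, AugPath E m k u v)
    (run : ℕ → FMState N) (h0 : run 0 = FMInit N) (i : ℕ)
    (hstep : ∀ i' < i, FMStep E (run i') (run (i' + 1)))
    (u : Fin N) (hu : (run i).matching u = none) :
    ∃ j, E u j ∧ (run i).h j ≤ l :=
  stmt11_general E l haug run h0 i hstep u hu
end

section
/- Let G = (U, V, E) be a bipartite graph with |U| = |V| = N containing a perfect matching, such that for every non-perfect matching M ⊆ E there is an augmenting path of length at most 2l + 1. Then throughout the execution of the fast matching algorithm, h_v(i) ≤ l + 1 for all v ∈ V and all iterations i. -/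
/-- An alternating walk (no injectivity requirements, no requirement that the start
is free): edges `(a i, b i)` are in the graph, edges `(a (i+1), b i)` are matched,
and the final right vertex `b t` is free. -/
def PWalk {N : ℕ} (E : Fin N → Fin N → Prop) (m : Fin N → Option (Fin N)) (t : ℕ)
    (a b : ℕ → Fin N) : Prop :=
  (∀ i ≤ t, E (a i) (b i)) ∧ (∀ i < t, m (a (i + 1)) = some (b i)) ∧
    ∀ u', m u' ≠ some (b t)

/-- Any alternating walk starting at a free left vertex can be shortened to an
augmenting path of no greater length. -/
lemma shorten {N : ℕ} {E : Fin N → Fin N → Prop} {m : Fin N → Option (Fin N)} :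
    ∀ t (a b : ℕ → Fin N), PWalk E m t a b → m (a 0) = none →
    ∃ k ≤ t, ∃ a' b', AugPath E m k a' b' := by
  intro t
  induction t using Nat.strong_induction_on with
  | _ t IH =>
  intro a b hw h0
  obtain ⟨hE, hM, hF⟩ := hw
  by_cases hinj : ∀ i ≤ t, ∀ j ≤ t, b i = b j → i = j
  · refine ⟨t, le_refl t, a, b, h0, hE, hM, hF, ?_, hinj⟩
    intro i hi j hj hab
    rcases Nat.eq_zero_or_pos i with hi0 | hi0
    · rcases Nat.eq_zero_or_pos j with hj0 | hj0
      · omega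
      · exfalso
        have hj1 := hM (j - 1) (by omega)
        rw [show j - 1 + 1 = j by omega] at hj1
        rw [hi0] at hab
        rw [← hab, h0] at hj1
        simp at hj1
    · rcases Nat.eq_zero_or_pos j with hj0 | hj0
      · exfalso
        have hi1 := hM (i - 1) (by omega)
        rw [show i - 1 + 1 = i by omega] at hi1
        rw [hj0] at hab
        rw [hab, h0] at hi1
        simp at hi1
      · have h1 := hM (i - 1) (by omega)
        have h2 := hM (j - 1) (by omega)
        rw [show i - 1 + 1 = i by omega] at h1
        rw [show j - 1 + 1 = j by omega] at h2
        rw [hab, h2] at h1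
        have hb := Option.some.inj h1
        have := hinj (j - 1) (by omega) (i - 1) (by omega) hb
        omega
  · push_neg at hinj
    obtain ⟨i, hi, j, hj, hbij, hij⟩ := hinj
    have splice : ∀ p q, p < q → q ≤ t → b p = b q →
        ∃ k ≤ t, ∃ a' b', AugPath E m k a' b' := by
      intro p q hpq hqt hb
      have hqt' : q < t := by
        rcases Nat.lt_or_ge q t with h | h
        · exact h
        · exfalso
          have hq : q = t := by omega
          have hmp := hM p (by omega)
          rw [hb, hq] at hmp
          exact hF _ hmp
      have hkey : ∃ k ≤ t - (q - p), ∃ a' b', AugPath E m k a' b' := by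
        apply IH (t - (q - p)) (by omega)
          (fun r => if r ≤ p then a r else a (r + (q - p)))
          (fun r => if r ≤ p then b r else b (r + (q - p)))
        · refine ⟨?_, ?_, ?_⟩
          · intro r hr
            by_cases h : r ≤ p
            · simp only [if_pos h]; exact hE r (by omega)
            · simp only [if_neg h]; exact hE (r + (q - p)) (by omega)
          · intro r hr
            by_cases h : r + 1 ≤ p
            · simp only [if_pos h, if_pos (show r ≤ p by omega)]
              exact hM r (by omega)
            · by_cases h2 : r ≤ p
              · have hrp : r = p := by omega
                simp only [if_neg h, if_pos h2]
                rw [show r + 1 + (q - p) = q + 1 by omega, hrp, hb]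
                exact hM q (by omega)
              · simp only [if_neg h, if_neg h2]
                rw [show r + 1 + (q - p) = r + (q - p) + 1 by omega]
                exact hM (r + (q - p)) (by omega)
          · have hnp : ¬ t - (q - p) ≤ p := by omega
            simp only [if_neg hnp]
            rw [show t - (q - p) + (q - p) = t by omega]
            exact hF
        · simp only [if_pos (Nat.zero_le p)]
          exact h0
      obtain ⟨k, hk, w⟩ := hkey
      exact ⟨k, by omega, w⟩
    rcases Nat.lt_or_ge i j with h | h
    · exact splice i j h hj hbij
    · exact splice j i (by omega) hi hbij.symm

/-- Telescoping the counters along an alternating walk. -/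
lemma telescope {N : ℕ} {E : Fin N → Fin N → Prop} {m : Fin N → Option (Fin N)}
    {h : Fin N → ℕ}
    (hP3 : ∀ z, (∀ u', m u' ≠ some z) → h z = 0)
    (hP4 : ∀ x j, m x = some j → ∀ k, E x k → h j ≤ h k + 1)
    {t : ℕ} {a b : ℕ → Fin N} (hw : PWalk E m t a b) :
    h (b 0) ≤ t := by
  obtain ⟨hE, hM, hF⟩ := hw
  have key : ∀ i ≤ t, h (b (t - i)) ≤ i := by
    intro i
    induction i with
    | zero =>
      intro _
      simpa using (hP3 _ hF).le
    | succ n IHn =>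
      intro hn
      have h2 := hM (t - (n + 1)) (by omega)
      rw [show t - (n + 1) + 1 = t - n by omega] at h2
      have h3 := hP4 _ _ h2 (b (t - n)) (hE (t - n) (by omega))
      have h4 := IHn (by omega)
      omega
  simpa using key t (le_refl t)

/-- Augmenting a matching along an augmenting path. -/
lemma augment_s12 {N : ℕ} {E : Fin N → Fin N → Prop} {m : Fin N → Option (Fin N)} {k0 : ℕ}
    {a b : ℕ → Fin N} (hm : IsMatching E m) (hpath : AugPath E m k0 a b) :
    ∃ m1 : Fin N → Option (Fin N),
      (∀ i ≤ k0, m1 (a i) = some (b i)) ∧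
      (∀ x, (∀ i ≤ k0, a i ≠ x) → m1 x = m x) ∧
      IsMatching E m1 ∧
      (∀ z, (∀ u', m1 u' ≠ some z) → ∀ u', m u' ≠ some z) ∧
      m1 (a 0) ≠ none ∧
      (∀ x, m1 x = none → m x = none) := by
  classical
  obtain ⟨ha0, hE, hM, hF, hainj, hbinj⟩ := hpath
  set m1 : Fin N → Option (Fin N) :=
    fun x => if h : ∃ i, i ≤ k0 ∧ a i = x then some (b (Nat.find h)) else m x with hm1
  have F1 : ∀ i ≤ k0, m1 (a i) = some (b i) := by
    intro i hi
    have hex : ∃ j, j ≤ k0 ∧ a j = a i := ⟨i, hi, rfl⟩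
    have hspec := Nat.find_spec hex
    have heq : Nat.find hex = i := hainj _ hspec.1 i hi hspec.2
    simp only [hm1, dif_pos hex, heq]
  have F2 : ∀ x, (∀ i ≤ k0, a i ≠ x) → m1 x = m x := by
    intro x hx
    have hne : ¬ ∃ i, i ≤ k0 ∧ a i = x := by
      rintro ⟨i, hi, he⟩; exact hx i hi he
    simp only [hm1, dif_neg hne]
  have himg : ∀ x j, m1 x = some j →
      (∃ i, i ≤ k0 ∧ x = a i ∧ j = b i) ∨ ((∀ i ≤ k0, a i ≠ x) ∧ m x = some j) := by
    intro x j hj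
    by_cases hx : ∃ i, i ≤ k0 ∧ a i = x
    · obtain ⟨i, hi, he⟩ := hx
      left
      rw [← he, F1 i hi] at hj
      exact ⟨i, hi, he.symm, (Option.some.inj hj).symm⟩
    · right
      have hx' : ∀ i ≤ k0, a i ≠ x := fun i hi he => hx ⟨i, hi, he⟩
      rw [F2 x hx'] at hj
      exact ⟨hx', hj⟩
  have notout : ∀ i ≤ k0, ∀ y, (∀ i' ≤ k0, a i' ≠ y) → m y ≠ some (b i) := by
    intro i hi y hy hmy
    rcases Nat.lt_or_ge i k0 with h | h
    · have := hm.2 y (a (i + 1)) (b i) hmy (hM i h)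
      exact hy (i + 1) (by omega) this.symm
    · have hik : i = k0 := by omega
      rw [hik] at hmy
      exact hF y hmy
  refine ⟨m1, F1, F2, ⟨?_, ?_⟩, ?_, ?_, ?_⟩
  · intro x j hj
    rcases himg x j hj with ⟨i, hi, hxe, hje⟩ | ⟨hx, hmx⟩
    · rw [hxe, hje]; exact hE i hi
    · exact hm.1 x j hmx
  · intro x x' j h1 h2
    rcases himg x j h1 with ⟨i, hi, hxe, hje⟩ | ⟨hx, hmx⟩
      <;> rcases himg x' j h2 with ⟨i', hi', hxe', hje'⟩ | ⟨hx', hmx'⟩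
    · have : i = i' := hbinj i hi i' hi' (by rw [← hje, ← hje'])
      rw [hxe, hxe', this]
    · exact absurd hmx' (by rw [hje] at *; exact notout i hi x' hx')
    · exact absurd hmx (by rw [hje'] at *; exact notout i' hi' x hx)
    · exact hm.2 x x' j hmx hmx'
  · intro z hz x hmx
    by_cases hx : ∃ i, i ≤ k0 ∧ a i = x
    · obtain ⟨i, hi, he⟩ := hx
      rcases Nat.eq_zero_or_pos i with h0 | h0
      · rw [← he, h0, ha0] at hmx; simp at hmx
      · have hmi : m (a i) = some (b (i - 1)) := by
          have := hM (i - 1) (by omega)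
          rwa [show i - 1 + 1 = i by omega] at this
        rw [← he, hmi] at hmx
        have hz' : z = b (i - 1) := (Option.some.inj hmx).symm
        exact hz (a (i - 1)) (by rw [F1 (i - 1) (by omega), hz'])
    · have hx' : ∀ i ≤ k0, a i ≠ x := fun i hi he => hx ⟨i, hi, he⟩
      rw [← F2 x hx'] at hmx
      exact hz x hmx
  · rw [F1 0 (Nat.zero_le k0)]; simp
  · intro x hx
    by_cases hxin : ∃ i, i ≤ k0 ∧ a i = x
    · obtain ⟨i, hi, he⟩ := hxin
      rw [← he, F1 i hi] at hx
      simp at hx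
    · have hx' : ∀ i ≤ k0, a i ≠ x := fun i hi he => hxin ⟨i, hi, he⟩
      rw [← F2 x hx']
      exact hx

/-- Key combinatorial lemma: with respect to any matching, any free left vertex `u`
admits an alternating walk of length at most `2l+1` to a free right vertex. -/
lemma claimW {N : ℕ} {E : Fin N → Fin N → Prop} {l : ℕ}
    (haug : ∀ m, IsMatching E m → ¬(∀ u, (m u).isSome) →
      ∃ k ≤ l, ∃ u v, AugPath E m k u v) :
    ∀ n (m : Fin N → Option (Fin N)), IsMatching E m →
      (Finset.univ.filter (fun x => m x = none)).card ≤ n →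
      ∀ u, m u = none →
      ∃ t ≤ l, ∃ A B : ℕ → Fin N, PWalk E m t A B ∧ A 0 = u := by
  classical
  intro n
  induction n with
  | zero =>
    intro m hm hcard u hu
    exfalso
    have hmem : u ∈ Finset.univ.filter (fun x => m x = none) := by simp [hu]
    have := Finset.card_pos.mpr ⟨u, hmem⟩
    omega
  | succ n IHn =>
    intro m hm hcard u hu
    have hnp : ¬ ∀ x, (m x).isSome := by
      intro hall; have := hall u; rw [hu] at this; simp at this
    obtain ⟨k, hkl, A0, B0, hpath0⟩ := haug m hm hnp
    have H : ∃ k, ∃ A B : ℕ → Fin N, AugPath E m k A B := ⟨k, A0, B0, hpath0⟩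
    set k0 := Nat.find H with hk0def
    have hk0l : k0 ≤ l := (Nat.find_min' H ⟨A0, B0, hpath0⟩).trans hkl
    obtain ⟨a, b, hpath⟩ := Nat.find_spec H
    have hminay : ∀ k', (∃ A B : ℕ → Fin N, AugPath E m k' A B) → k0 ≤ k' :=
      fun k' hk' => Nat.find_min' H hk'
    by_cases hstart : a 0 = u
    · exact ⟨k0, hk0l, a, b, ⟨hpath.2.1, hpath.2.2.1, hpath.2.2.2.1⟩, hstart⟩
    · have hunotin : ∀ i ≤ k0, a i ≠ u := by
        intro i hi he
        rcases Nat.eq_zero_or_pos i with h0 | h0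
        · rw [h0] at he; exact hstart he
        · have := hpath.2.2.1 (i - 1) (by omega)
          rw [show i - 1 + 1 = i by omega, he, hu] at this
          simp at this
      obtain ⟨m1, F1, F2, F3, F5, F6a, F6b⟩ := augment_s12 hm hpath
      have hm1u : m1 u = none := by rw [F2 u hunotin]; exact hu
      have hsub : Finset.univ.filter (fun x => m1 x = none) ⊂
          Finset.univ.filter (fun x => m x = none) := by
        constructor
        · intro x hx
          simp only [Finset.mem_filter, Finset.mem_univ, true_and] at *
          exact F6b x hx
        · intro hcon
          have ha0mem : a 0 ∈ Finset.univ.filter (fun x => m x = none) := by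
            simp [hpath.1]
          have := hcon ha0mem
          simp only [Finset.mem_filter, Finset.mem_univ, true_and] at this
          exact F6a this
      have hcard1 : (Finset.univ.filter (fun x => m1 x = none)).card ≤ n := by
        have := Finset.card_lt_card hsub
        omega
      obtain ⟨t1, ht1l, a', b', hw1, ha'0⟩ := IHn m1 F3 hcard1 u hm1u
      obtain ⟨hw1E, hw1M, hw1F⟩ := hw1
      -- Claim C: a partial walk in `m1` starting on the augmenting path at `a s`
      -- must have length at least `k0 - s`.
      have claimC : ∀ t', ∀ s ≤ k0, ∀ (c d : ℕ → Fin N), PWalk E m1 t' c d →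
          c 0 = a s → k0 ≤ s + t' := by
        intro t'
        induction t' using Nat.strong_induction_on with
        | _ t' IHt =>
        intro s hs c d hw hc0
        obtain ⟨hcE, hcM, hcF⟩ := hw
        -- the concatenation of the path prefix with the (reversal-free part of) the walk
        have core : ∀ t'' ≤ t', (∀ r < t'', ∀ s' ≤ k0, c (r + 1) ≠ a s') →
            (∀ i ≤ s + t'', E ((fun i => if i < s then a i else c (i - s)) i)
              ((fun i => if i < s then b i else d (i - s)) i)) ∧
            (∀ i < s + t'', m ((fun i => if i < s then a i else c (i - s)) (i + 1)) =
              some ((fun i => if i < s then b i else d (i - s)) i)) := by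
          intro t'' ht'' hnr
          constructor
          · intro i hi
            by_cases h : i < s
            · simp only [if_pos h]; exact hpath.2.1 i (by omega)
            · simp only [if_neg h]; exact hcE (i - s) (by omega)
          · intro i hi
            by_cases h : i + 1 < s
            · simp only [if_pos h, if_pos (show i < s by omega)]
              exact hpath.2.2.1 i (by omega)
            · by_cases h2 : i < s
              · -- i + 1 = s
                simp only [if_neg h, if_pos h2]
                rw [show i + 1 - s = 0 by omega, hc0]
                have hm2 := hpath.2.2.1 (s - 1) (by omega)
                rw [show s - 1 + 1 = s by omega] at hm2
                rw [hm2, show i = s - 1 by omega]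
              · simp only [if_neg h, if_neg h2]
                rw [show i + 1 - s = (i - s) + 1 by omega]
                have hm1c := hcM (i - s) (by omega)
                rw [← F2 (c (i - s + 1)) (fun i' hi' he => hnr (i - s) (by omega) i' hi' he.symm)]
                exact hm1c
        have hstart0 : ∀ f : ℕ → Fin N,
            m ((fun i => if i < s then a i else c (i - s)) 0) = none := by
          intro _
          by_cases h : 0 < s
          · simp only [if_pos h]; exact hpath.1
          · have hs00 : s = 0 := by omega
            simp only [if_neg (show ¬ (0:ℕ) < s by omega)]
            rw [show (0:ℕ) - s = 0 by omega, hc0, hs00]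
            exact hpath.1
        by_cases hrev : ∃ r, r < t' ∧ ∃ s', s' ≤ k0 ∧ c (r + 1) = a s'
        · set i0 := Nat.find hrev with hi0def
          obtain ⟨hi0t, s0, hs0, hcs0⟩ := Nat.find_spec hrev
          rw [← hi0def] at hi0t hcs0
          have hnorev : ∀ r < i0, ∀ s' ≤ k0, c (r + 1) ≠ a s' := by
            intro r hr s' hs' he
            exact Nat.find_min hrev hr ⟨by omega, s', hs', he⟩
          have hdi0 : d i0 = b s0 := by
            have h1 := hcM i0 hi0t
            rw [hcs0, F1 s0 hs0] at h1
            exact (Option.some.inj h1).symm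
          obtain ⟨hcoreE, hcoreM⟩ := core i0 (by omega) hnorev
          rcases Nat.lt_or_ge s0 k0 with hs0k | hs0k
          · -- s0 < k0 : extend by the path from s0 to k0, and use IH on the suffix
            have hwalk : PWalk E m (s + i0 + (k0 - s0))
                (fun i => if i ≤ s + i0 then (if i < s then a i else c (i - s))
                  else a (i - (s + i0) + s0))
                (fun i => if i ≤ s + i0 then (if i < s then b i else d (i - s))
                  else b (i - (s + i0) + s0)) := by
              refine ⟨?_, ?_, ?_⟩
              · intro i hi
                by_cases h : i ≤ s + i0
                · simp only [if_pos h]; exact hcoreE i h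
                · simp only [if_neg h]
                  exact hpath.2.1 (i - (s + i0) + s0) (by omega)
              · intro i hi
                by_cases h : i + 1 ≤ s + i0
                · simp only [if_pos h, if_pos (show i ≤ s + i0 by omega)]
                  exact hcoreM i (by omega)
                · by_cases h2 : i ≤ s + i0
                  · -- i = s + i0 : junction
                    simp only [if_neg h, if_pos h2, if_neg (show ¬ i < s by omega)]
                    rw [show i + 1 - (s + i0) + s0 = s0 + 1 by omega,
                      show i - s = i0 by omega, hdi0]
                    exact hpath.2.2.1 s0 hs0k
                  · simp only [if_neg h, if_neg h2]
                    rw [show i + 1 - (s + i0) + s0 = (i - (s + i0) + s0) + 1 by omega]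
                    exact hpath.2.2.1 (i - (s + i0) + s0) (by omega)
              · show ∀ u', m u' ≠ some (if s + i0 + (k0 - s0) ≤ s + i0
                  then (if s + i0 + (k0 - s0) < s then b (s + i0 + (k0 - s0))
                    else d (s + i0 + (k0 - s0) - s))
                  else b (s + i0 + (k0 - s0) - (s + i0) + s0))
                have hh : ¬ s + i0 + (k0 - s0) ≤ s + i0 := by omega
                rw [if_neg hh, show s + i0 + (k0 - s0) - (s + i0) + s0 = k0 by omega]
                exact hpath.2.2.2.1
            have hst : m ((fun i => if i ≤ s + i0 then (if i < s then a i else c (i - s))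
                else a (i - (s + i0) + s0)) 0) = none := by
              show m (if (0:ℕ) ≤ s + i0 then (if (0:ℕ) < s then a 0 else c (0 - s))
                else a (0 - (s + i0) + s0)) = none
              rw [if_pos (Nat.zero_le _)]
              exact hstart0 a
            obtain ⟨kk, hkk, a2, b2, hp2⟩ := shorten _ _ _ hwalk hst
            have hk0le : k0 ≤ s + i0 + (k0 - s0) := (hminay kk ⟨a2, b2, hp2⟩).trans hkk
            -- IH on the suffix starting right after the reversal
            have hsuffix : PWalk E m1 (t' - i0 - 1) (fun r => c (r + i0 + 1))
                (fun r => d (r + i0 + 1)) := by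
              refine ⟨?_, ?_, ?_⟩
              · intro i hi; exact hcE (i + i0 + 1) (by omega)
              · intro i hi
                have := hcM (i + i0 + 1) (by omega)
                rwa [show i + i0 + 1 + 1 = (i + 1) + i0 + 1 by omega] at this
              · show ∀ u', m1 u' ≠ some (d (t' - i0 - 1 + i0 + 1))
                rw [show t' - i0 - 1 + i0 + 1 = t' by omega]
                exact hcF
            have hIH := IHt (t' - i0 - 1) (by omega) s0 hs0 _ _ hsuffix
              (by simpa using hcs0)
            omega
          · -- s0 = k0 : the walk prefix already reaches the free vertex b k0
            have hs0e : s0 = k0 := by omega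
            have hwalk : PWalk E m (s + i0)
                (fun i => if i < s then a i else c (i - s))
                (fun i => if i < s then b i else d (i - s)) := by
              refine ⟨hcoreE, hcoreM, ?_⟩
              show ∀ u', m u' ≠ some (if s + i0 < s then b (s + i0) else d (s + i0 - s))
              rw [if_neg (show ¬ s + i0 < s by omega),
                show s + i0 - s = i0 by omega, hdi0, hs0e]
              exact hpath.2.2.2.1
            obtain ⟨kk, hkk, a2, b2, hp2⟩ := shorten _ _ _ hwalk (hstart0 a)
            have := (hminay kk ⟨a2, b2, hp2⟩).trans hkk
            omega
        · -- no reversal at all: the whole walk transfers to m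
          push_neg at hrev
          obtain ⟨hcoreE, hcoreM⟩ := core t' (le_refl t')
            (fun r hr s' hs' he => (hrev r (by omega) s' hs') he)
          have hwalk : PWalk E m (s + t')
              (fun i => if i < s then a i else c (i - s))
              (fun i => if i < s then b i else d (i - s)) := by
            refine ⟨hcoreE, hcoreM, ?_⟩
            show ∀ u', m u' ≠ some (if s + t' < s then b (s + t') else d (s + t' - s))
            rw [if_neg (show ¬ s + t' < s by omega), show s + t' - s = t' by omega]
            exact F5 _ hcF
          obtain ⟨kk, hkk, a2, b2, hp2⟩ := shorten _ _ _ hwalk (hstart0 a)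
          exact (hminay kk ⟨a2, b2, hp2⟩).trans hkk
      -- Transfer the walk in m1 back to a walk in m starting at u
      by_cases hrev : ∃ r, r < t1 ∧ ∃ s', s' ≤ k0 ∧ a' (r + 1) = a s'
      · set i0 := Nat.find hrev with hi0def
        obtain ⟨hi0t, s0, hs0, hcs0⟩ := Nat.find_spec hrev
        rw [← hi0def] at hi0t hcs0
        have hnorev : ∀ r < i0, ∀ s' ≤ k0, a' (r + 1) ≠ a s' := by
          intro r hr s' hs' he
          exact Nat.find_min hrev hr ⟨by omega, s', hs', he⟩
        have hdi0 : b' i0 = b s0 := by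
          have h1 := hw1M i0 hi0t
          rw [hcs0, F1 s0 hs0] at h1
          exact (Option.some.inj h1).symm
        have hprefM : ∀ i < i0, m (a' (i + 1)) = some (b' i) := by
          intro i hi
          rw [← F2 (a' (i + 1)) (fun i' hi' he => hnorev i (by omega) i' hi' he.symm)]
          exact hw1M i (by omega)
        rcases Nat.lt_or_ge s0 k0 with hs0k | hs0k
        · -- suffix bound via claimC
          have hsuffix : PWalk E m1 (t1 - i0 - 1) (fun r => a' (r + i0 + 1))
              (fun r => b' (r + i0 + 1)) := by
            refine ⟨?_, ?_, ?_⟩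
            · intro i hi; exact hw1E (i + i0 + 1) (by omega)
            · intro i hi
              have := hw1M (i + i0 + 1) (by omega)
              rwa [show i + i0 + 1 + 1 = (i + 1) + i0 + 1 by omega] at this
            · show ∀ u', m1 u' ≠ some (b' (t1 - i0 - 1 + i0 + 1))
              rw [show t1 - i0 - 1 + i0 + 1 = t1 by omega]
              exact hw1F
          have hC := claimC (t1 - i0 - 1) s0 hs0 _ _ hsuffix (by simpa using hcs0)
          refine ⟨i0 + (k0 - s0), by omega,
            (fun i => if i ≤ i0 then a' i else a (i - i0 + s0)),
            (fun i => if i ≤ i0 then b' i else b (i - i0 + s0)), ⟨?_, ?_, ?_⟩, ?_⟩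
          · intro i hi
            by_cases h : i ≤ i0
            · simp only [if_pos h]; exact hw1E i (by omega)
            · simp only [if_neg h]; exact hpath.2.1 (i - i0 + s0) (by omega)
          · intro i hi
            by_cases h : i + 1 ≤ i0
            · simp only [if_pos h, if_pos (show i ≤ i0 by omega)]
              exact hprefM i (by omega)
            · by_cases h2 : i ≤ i0
              · have hie : i = i0 := by omega
                simp only [if_neg h, if_pos h2]
                rw [show i + 1 - i0 + s0 = s0 + 1 by omega, hie, hdi0]
                exact hpath.2.2.1 s0 hs0k
              · simp only [if_neg h, if_neg h2]
                rw [show i + 1 - i0 + s0 = (i - i0 + s0) + 1 by omega]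
                exact hpath.2.2.1 (i - i0 + s0) (by omega)
          · show ∀ u', m u' ≠ some (if i0 + (k0 - s0) ≤ i0 then b' (i0 + (k0 - s0))
              else b (i0 + (k0 - s0) - i0 + s0))
            rw [if_neg (show ¬ i0 + (k0 - s0) ≤ i0 by omega),
              show i0 + (k0 - s0) - i0 + s0 = k0 by omega]
            exact hpath.2.2.2.1
          · show (if (0:ℕ) ≤ i0 then a' 0 else a (0 - i0 + s0)) = u
            rw [if_pos (Nat.zero_le i0)]
            exact ha'0
        · -- s0 = k0 : prefix of the walk already ends at the free vertex b k0
          have hs0e : s0 = k0 := by omega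
          refine ⟨i0, by omega, a', b', ⟨?_, hprefM, ?_⟩, ha'0⟩
          · intro i hi; exact hw1E i (by omega)
          · rw [hdi0, hs0e]; exact hpath.2.2.2.1
      · -- no reversal: the walk transfers directly
        push_neg at hrev
        refine ⟨t1, ht1l, a', b', ⟨hw1E, ?_, F5 _ hw1F⟩, ha'0⟩
        intro i hi
        rw [← F2 (a' (i + 1)) (fun i' hi' he => (hrev i (by omega) i' hi') he.symm)]
        exact hw1M i hi

/-- Key lemma: any free left vertex has a neighbour whose counter is at most `l`. -/
lemma keyLemma {N : ℕ} {E : Fin N → Fin N → Prop} {l : ℕ}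
    (haug : ∀ m, IsMatching E m → ¬(∀ u, (m u).isSome) →
      ∃ k ≤ l, ∃ u v, AugPath E m k u v)
    (m : Fin N → Option (Fin N)) (h : Fin N → ℕ) (hm : IsMatching E m)
    (hP3 : ∀ z, (∀ u', m u' ≠ some z) → h z = 0)
    (hP4 : ∀ x j, m x = some j → ∀ k, E x k → h j ≤ h k + 1)
    {u : Fin N} (hu : m u = none) : ∃ k, E u k ∧ h k ≤ l := by
  classical
  obtain ⟨t, htl, A, B, hw, hA0⟩ :=
    claimW haug (Finset.univ.filter (fun x => m x = none)).card m hm le_rfl u hu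
  refine ⟨B 0, ?_, (telescope hP3 hP4 hw).trans htl⟩
  have := hw.1 0 (Nat.zero_le t)
  rwa [hA0] at this

/-- If `G` contains a perfect matching and every non-perfect matching admits an
augmenting path of length at most `2l + 1`, then throughout the execution of the fast
matching algorithm every counter satisfies `h_v(i) ≤ l + 1`. -/
theorem stmt12 {N T : ℕ} (E : Fin N → Fin N → Prop) (l : ℕ)
    (hpm : ∃ m, IsMatching E m ∧ ∀ u, (m u).isSome)
    (haug : ∀ m, IsMatching E m → ¬(∀ u, (m u).isSome) →
      ∃ k ≤ l, ∃ u v, AugPath E m k u v)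
    (run : ℕ → FMState N) (h0 : run 0 = FMInit N)
    (hstep : ∀ i < T, FMStep E (run i) (run (i + 1))) :
    ∀ i ≤ T, ∀ v : Fin N, (run i).h v ≤ l + 1 := by
  classical
  -- the invariant
  let Inv : FMState N → Prop := fun s =>
    IsMatching E s.matching ∧
    (∀ z, (∀ u', s.matching u' ≠ some z) → s.h z = 0) ∧
    (∀ x j, s.matching x = some j → ∀ k, E x k → s.h j ≤ s.h k + 1) ∧
    (∀ v, s.h v ≤ l + 1)
  have hinit : Inv (FMInit N) := by
    refine ⟨⟨?_, ?_⟩, ?_, ?_, ?_⟩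
    · intro u j hj; simp [FMInit] at hj
    · intro u u' j hj; simp [FMInit] at hj
    · intro z _; simp [FMInit]
    · intro x j hj; simp [FMInit] at hj
    · intro v; simp [FMInit]
  have hpres : ∀ s s', Inv s → FMStep E s s' → Inv s' := by
    intro s s' hs hst
    obtain ⟨hmatch, hP3, hP4, hP5⟩ := hs
    obtain ⟨u, j, hu, hEuj, hjmin, hh', hm'⟩ := hst
    obtain ⟨kk, hEuk, hkl⟩ := keyLemma haug s.matching s.h hmatch hP3 hP4 hu
    have hjl : s.h j ≤ l := (hjmin kk hEuk).trans hkl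
    have hm'u : s'.matching u = some j := by rw [hm']; simp
    have hval : ∀ x w, x ≠ u → s'.matching x = some w →
        s.matching x = some w ∧ w ≠ j := by
      intro x w hx hw
      simp only [hm'] at hw
      rw [if_neg hx] at hw
      by_cases hj' : s.matching x = some j
      · rw [if_pos hj'] at hw; simp at hw
      · rw [if_neg hj'] at hw
        exact ⟨hw, fun he => hj' (he ▸ hw)⟩
    have hhle : ∀ k, s.h k ≤ s'.h k := by
      intro k
      rw [hh']
      by_cases hk : k = j
      · subst hk; rw [Function.update_self]; omega
      · rw [Function.update_of_ne hk]
    refine ⟨⟨?_, ?_⟩, ?_, ?_, ?_⟩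
    · -- edges
      intro x w hw
      by_cases hx : x = u
      · subst hx
        rw [hm'u] at hw
        rw [← Option.some.inj hw]
        exact hEuj
      · exact hmatch.1 x w (hval x w hx hw).1
    · -- injectivity
      intro x x' w h1 h2
      by_cases hx : x = u <;> by_cases hx' : x' = u
      · rw [hx, hx']
      · exfalso
        subst hx
        rw [hm'u] at h1
        have hwj : w = j := (Option.some.inj h1).symm
        exact (hval x' w hx' h2).2 hwj
      · exfalso
        subst hx'
        rw [hm'u] at h2
        have hwj : w = j := (Option.some.inj h2).symm
        exact (hval x w hx h1).2 hwj
      · exact hmatch.2 x x' w (hval x w hx h1).1 (hval x' w hx' h2).1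
    · -- free right vertices have counter 0
      intro z hz
      have hzj : z ≠ j := by
        intro he
        exact hz u (by rw [hm'u, he])
      have hzfree : ∀ x, s.matching x ≠ some z := by
        intro x hx
        by_cases hxu : x = u
        · rw [hxu, hu] at hx; simp at hx
        · apply hz x
          simp only [hm']
          rw [if_neg hxu, if_neg (fun he => hzj (by
            rw [he] at hx; exact (Option.some.inj hx).symm ▸ rfl))]
          exact hx
      rw [hh', Function.update_of_ne hzj]
      exact hP3 z hzfree
    · -- local optimality of matched counters
      intro x w hw k hEk
      by_cases hx : x = u
      · subst hx
        rw [hm'u] at hw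
        have hwj : w = j := (Option.some.inj hw).symm
        rw [hh', hwj, Function.update_self]
        by_cases hk : k = j
        · rw [hk, Function.update_self]; omega
        · rw [Function.update_of_ne hk]
          have := hjmin k hEk
          omega
      · obtain ⟨hmx, hwj⟩ := hval x w hx hw
        have h1 := hP4 x w hmx k hEk
        rw [hh', Function.update_of_ne hwj]
        by_cases hk : k = j
        · rw [hk, Function.update_self]
          rw [hk] at h1
          omega
        · rw [Function.update_of_ne hk]
          omega
    · -- counters bounded
      intro v
      rw [hh']
      by_cases hv : v = j
      · subst hv; rw [Function.update_self]; omega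
      · rw [Function.update_of_ne hv]; exact hP5 v
  have hInvAll : ∀ i ≤ T, Inv (run i) := by
    intro i
    induction i with
    | zero => intro _; rw [h0]; exact hinit
    | succ n IHn =>
      intro hn
      exact hpres _ _ (IHn (by omega)) (hstep n (by omega))
  intro i hi v
  exact (hInvAll i hi).2.2.2 v
end

section
/- Let G = (U, V, E) be a bipartite graph with |U| = |V| = N containing a perfect matching, such that for every non-maximal matching M there exists an augmenting path for M of length at most 2L + 1. Then the fast matching algorithm terminates within T ≤ N(L + 1) iterations. -/
/-!
Two invariants of the run drive the bound: a right vertex with a nonzero counter is matched, and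
if `x` is matched to `v` then `h v ≤ h w + 1` for every neighbour `w` of `x`. Along an augmenting
path `u₀ v₀ u₁ v₁ … u_k v_k` they give `h v_i ≤ h v_{i+1} + 1` and `h v_k = 0`, so the minimal
counter among the neighbours of the free vertex `u₀` is at most `k`. Hence, once every free vertex
starts an augmenting path with `k ≤ L`, every incremented counter was at most `L`, so `h v ≤ L + 1`
throughout and `T = ∑ h v ≤ N (L + 1)`.

The hypothesis only provides a short augmenting path from *some* free vertex. This is upgraded by
induction on the number of free vertices: augment `m` along a shortest augmenting path `P` (from
`u' ≠ u`), take a short path `Q` from `u` for the result, and compare `m` with `M = (m ⊕ P) ⊕ Q`.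
The `M`-alternating augmenting paths for `m` from `u` and from `u'` are disjoint and lie where `M`
differs from `m`, that is on `P ∪ Q`; the one from `u'` is at least as long as `P`, so the one from
`u` is at most as long as `Q`.
-/

open Finset

namespace FastMatching

variable {N : ℕ} {E : Fin N → Fin N → Prop}

theorem lt_of_injOn_Iic {t : ℕ} {f : ℕ → Fin N} (hf : ∀ i ≤ t, ∀ j ≤ t, f i = f j → i = j) :
    t < N := by
  simpa using card_le_card_of_injOn f (s := range (t + 1)) (t := univ)
    (fun _ _ => mem_univ _) (fun i hi j hj hij => hf i (by simp_all) j (by simp_all) hij)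

theorem card_image_range_succ {α : Type*} [DecidableEq α] {t : ℕ} {f : ℕ → α}
    (hf : ∀ i ≤ t, ∀ j ≤ t, f i = f j → i = j) : #((range (t + 1)).image f) = t + 1 := by
  rw [card_image_of_injOn fun i hi j hj hij => hf i (by simp_all) j (by simp_all) hij,
    card_range]

section Augment

variable {m : Fin N → Option (Fin N)} {k : ℕ} {us vs : ℕ → Fin N}

noncomputable def augment (m : Fin N → Option (Fin N)) (k : ℕ) (us vs : ℕ → Fin N) :
    Fin N → Option (Fin N) :=
  fun x => if h : ∃ i ≤ k, us i = x then some (vs (Nat.find h)) else m x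

theorem augment_apply_of_le (hinj : ∀ i ≤ k, ∀ j ≤ k, us i = us j → i = j) {i : ℕ} (hi : i ≤ k) :
    augment m k us vs (us i) = some (vs i) := by
  have h : ∃ i' ≤ k, us i' = us i := ⟨i, hi, rfl⟩
  obtain ⟨hle, heq⟩ := Nat.find_spec h
  rw [augment, dif_pos h, hinj _ hle _ hi heq]

theorem augment_apply_of_forall_ne {x : Fin N} (hx : ∀ i ≤ k, us i ≠ x) :
    augment m k us vs x = m x :=
  dif_neg fun ⟨i, hi, hix⟩ => hx i hi hix

theorem exists_eq_of_augment_apply_ne {x : Fin N} (hx : augment m k us vs x ≠ m x) :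
    ∃ i ≤ k, us i = x := by
  by_contra! h
  exact hx (augment_apply_of_forall_ne h)

theorem card_augment_ne_le (m : Fin N → Option (Fin N)) (k : ℕ) (us vs : ℕ → Fin N) :
    #(univ.filter fun x => augment m k us vs x ≠ m x) ≤ k + 1 := by
  calc #(univ.filter fun x => augment m k us vs x ≠ m x)
      ≤ #((range (k + 1)).image us) := by
        refine card_le_card fun x hx => ?_
        obtain ⟨i, hi, rfl⟩ := exists_eq_of_augment_apply_ne (mem_filter.1 hx).2
        exact mem_image_of_mem us (mem_range.2 (Nat.lt_succ_of_le hi))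
    _ ≤ k + 1 := card_image_le.trans (card_range _).le

theorem isSome_augment (hinj : ∀ i ≤ k, ∀ j ≤ k, us i = us j → i = j) {x : Fin N}
    (hx : (m x).isSome) : (augment m k us vs x).isSome := by
  by_cases h : ∃ i ≤ k, us i = x
  · obtain ⟨i, hi, rfl⟩ := h
    simp [augment_apply_of_le hinj hi]
  · push Not at h
    rwa [augment_apply_of_forall_ne h]

theorem exists_eq_of_apply_eq_some_of_augPath (hm : IsMatching E m) (hP : AugPath E m k us vs)
    {x : Fin N} {i : ℕ} (hi : i ≤ k) (hx : m x = some (vs i)) : ∃ i' ≤ k, us i' = x := by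
  obtain ⟨-, -, hmatched, hfree, -⟩ := hP
  rcases hi.lt_or_eq with hi | rfl
  · exact ⟨i + 1, hi, hm.2 _ _ _ (hmatched i hi) hx⟩
  · exact absurd hx (hfree x)

theorem augment_apply_eq_some (hm : IsMatching E m) (hP : AugPath E m k us vs)
    {x j : Fin N} (hx : augment m k us vs x = some j) :
    (∃ i ≤ k, us i = x ∧ vs i = j) ∨ ((∀ i ≤ k, vs i ≠ j) ∧ m x = some j) := by
  by_cases h : ∃ i ≤ k, us i = x
  · obtain ⟨i, hi, rfl⟩ := h
    rw [augment_apply_of_le hP.2.2.2.2.1 hi, Option.some_inj] at hx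
    exact .inl ⟨i, hi, rfl, hx⟩
  · rw [augment_apply_of_forall_ne (by push Not at h; exact h)] at hx
    refine .inr ⟨fun i hi hij => h ?_, hx⟩
    exact exists_eq_of_apply_eq_some_of_augPath hm hP hi (hij ▸ hx)

theorem isMatching_augment (hm : IsMatching E m) (hP : AugPath E m k us vs) :
    IsMatching E (augment m k us vs) := by
  refine ⟨fun x j hx => ?_, fun x x' j hx hx' => ?_⟩
  · rcases augment_apply_eq_some hm hP hx with ⟨i, hi, rfl, rfl⟩ | ⟨-, hx⟩
    exacts [hP.2.1 i hi, hm.1 x j hx]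
  · rcases augment_apply_eq_some hm hP hx with ⟨i, hi, rfl, rfl⟩ | ⟨hj, hx⟩ <;>
      rcases augment_apply_eq_some hm hP hx' with ⟨i', hi', rfl, hii'⟩ | ⟨hj', hx'⟩
    · rw [hP.2.2.2.2.2 i' hi' i hi hii']
    · exact absurd rfl (hj' i hi)
    · exact absurd hii' (hj i' hi')
    · exact hm.2 x x' j hx hx'

theorem augment_apply_eq_none_iff (hP : AugPath E m k us vs) (x : Fin N) :
    augment m k us vs x = none ↔ m x = none ∧ x ≠ us 0 := by
  obtain ⟨h0, -, hmatched, -, hinj, -⟩ := hP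
  by_cases h : ∃ i ≤ k, us i = x
  · obtain ⟨i, hi, rfl⟩ := h
    rw [augment_apply_of_le hinj hi]
    cases i with
    | zero => simp
    | succ i => simp [hmatched i (by omega)]
  · push Not at h
    rw [augment_apply_of_forall_ne h]
    exact (and_iff_left fun hx => h 0 k.zero_le hx.symm).symm

theorem card_free_augment_lt (hP : AugPath E m k us vs) :
    #(univ.filter fun x => augment m k us vs x = none) < #(univ.filter fun x => m x = none) := by
  have hfree : univ.filter (fun x => augment m k us vs x = none) =
      (univ.filter fun x => m x = none).erase (us 0) := by
    ext x
    simp [augment_apply_eq_none_iff hP, and_comm]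
  rw [hfree]
  exact card_erase_lt_of_mem (by simp [hP.1])

end Augment

section Alternating

variable {m M : Fin N → Option (Fin N)}

theorem exists_augPath_of_alternating (hM : IsMatching E M)
    (hcov : ∀ x, (m x).isSome → (M x).isSome) (t : ℕ) (xs ws : ℕ → Fin N)
    (h0 : m (xs 0) = none) (hxsM : ∀ i ≤ t, M (xs i) = some (ws i))
    (hxsm : ∀ i < t, m (xs (i + 1)) = some (ws i))
    (hinj : ∀ i ≤ t, ∀ j ≤ t, ws i = ws j → i = j) :
    ∃ t' xs' ws', AugPath E m t' xs' ws' ∧ xs' 0 = xs 0 ∧ ∀ i ≤ t', M (xs' i) = some (ws' i) := by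
  by_cases hfree : ∀ x, m x ≠ some (ws t)
  · have hxsinj : ∀ i ≤ t, ∀ j ≤ t, xs i = xs j → i = j := fun i hi j hj hij =>
      hinj i hi j hj (Option.some_inj.1 ((hxsM i hi).symm.trans (hij ▸ hxsM j hj)))
    exact ⟨t, xs, ws, ⟨h0, fun i hi => hM.1 _ _ (hxsM i hi), hxsm, hfree, hxsinj, hinj⟩, rfl, hxsM⟩
  push Not at hfree
  obtain ⟨x, hx⟩ := hfree
  obtain ⟨w, hw⟩ := Option.isSome_iff_exists.1 (hcov x (by simp [hx]))
  -- `w` is new, since its `M`-partner `x` is matched in `m` to `ws t`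
  have hw_new : ∀ i ≤ t, ws i ≠ w := by
    intro i hi hwi
    have hxi : xs i = x := hM.2 _ _ _ (hwi ▸ hxsM i hi) hw
    cases i with
    | zero => simp [← hxi, h0] at hx
    | succ i =>
      rw [← hxi, hxsm i (by omega), Option.some_inj] at hx
      exact absurd (hinj i (by omega) t le_rfl hx) (by omega)
  have ht : t < N := lt_of_injOn_Iic hinj
  refine exists_augPath_of_alternating hM hcov (t + 1) (Function.update xs (t + 1) x)
    (Function.update ws (t + 1) w) (by simpa using h0) (fun i hi => ?_) (fun i hi => ?_)
    (fun i hi j hj hij => ?_)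
  · rcases hi.lt_or_eq with hi | rfl
    · simpa [hi.ne] using hxsM i (by omega)
    · simpa using hw
  · rcases (Nat.lt_succ_iff.1 hi).lt_or_eq with hi | rfl
    · simpa [hi.ne, (hi.trans (Nat.lt_succ_self t)).ne] using hxsm i hi
    · simpa using hx
  · rcases hi.lt_or_eq with hi | rfl <;> rcases hj.lt_or_eq with hj | rfl
    · simp only [Function.update_of_ne hi.ne, Function.update_of_ne hj.ne] at hij
      exact hinj i (by omega) j (by omega) hij
    · exact absurd (by simpa [hi.ne] using hij) (hw_new i (by omega))
    · exact absurd (by simpa [hj.ne] using hij.symm) (hw_new j (by omega))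
    · rfl
termination_by N - t

theorem exists_augPath_of_isSome (hM : IsMatching E M)
    (hcov : ∀ x, (m x).isSome → (M x).isSome) {u : Fin N} (hu : m u = none)
    (huM : (M u).isSome) :
    ∃ t xs ws, AugPath E m t xs ws ∧ xs 0 = u ∧ ∀ i ≤ t, M (xs i) = some (ws i) := by
  obtain ⟨w, hw⟩ := Option.isSome_iff_exists.1 huM
  exact exists_augPath_of_alternating hM hcov 0 (fun _ => u) (fun _ => w) hu
    (fun _ _ => hw) (fun _ hi => absurd hi (Nat.not_lt_zero _)) (fun i hi j hj _ => by omega)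

theorem augPath_ne_of_zero_ne (hM : IsMatching E M) {t t' : ℕ} {xs ws ys zs : ℕ → Fin N}
    (hX : AugPath E m t xs ws) (hXM : ∀ i ≤ t, M (xs i) = some (ws i))
    (hY : AugPath E m t' ys zs) (hYM : ∀ i ≤ t', M (ys i) = some (zs i))
    (h0 : xs 0 ≠ ys 0) : ∀ a ≤ t, ∀ b ≤ t', xs a ≠ ys b := by
  obtain ⟨hx0, -, hxm, -⟩ := hX
  obtain ⟨hy0, -, hym, -⟩ := hY
  intro a
  induction a with
  | zero =>
    rintro - (_ | b) hb hab
    · exact h0 hab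
    · have h := hym b (by omega)
      rw [← hab, hx0] at h
      exact absurd h (Option.some_ne_none _).symm
  | succ a ih =>
    rintro ha (_ | b) hb hab
    · have h := hxm a (by omega)
      rw [hab, hy0] at h
      exact absurd h (Option.some_ne_none _).symm
    · -- the `m`-partners agree, hence so do the `M`-partners one step back
      have hwz : ws a = zs b := Option.some_inj.1 <|
        (hxm a (by omega)).symm.trans (hab ▸ hym b (by omega))
      exact ih (by omega) b (by omega) (hM.2 _ _ _ (hXM a (by omega)) (hwz ▸ hYM b (by omega)))

theorem apply_ne_of_augPath {t : ℕ} {xs ws : ℕ → Fin N} (hX : AugPath E m t xs ws)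
    (hXM : ∀ i ≤ t, M (xs i) = some (ws i)) {i : ℕ} (hi : i ≤ t) : M (xs i) ≠ m (xs i) := by
  obtain ⟨hx0, -, hxm, -, -, hinj⟩ := hX
  cases i with
  | zero => simp [hXM 0 hi, hx0]
  | succ i =>
    rw [hXM _ hi, hxm i hi, Ne, Option.some_inj]
    exact fun h => absurd (hinj _ hi _ (by omega) h) (by omega)

end Alternating

theorem exists_augPath_le_of_augment {m : Fin N → Option (Fin N)} {k k' : ℕ}
    {us vs qs ws : ℕ → Fin N} (hm : IsMatching E m) (hP : AugPath E m k us vs)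
    (hshortest : ∀ t xs zs, AugPath E m t xs zs → k ≤ t)
    (hQ : AugPath E (augment m k us vs) k' qs ws) :
    ∃ t ≤ k', ∃ xs zs, AugPath E m t xs zs ∧ xs 0 = qs 0 := by
  set m' := augment m k us vs
  set M := augment m' k' qs ws
  have hPinj := hP.2.2.2.2.1
  have hQinj := hQ.2.2.2.2.1
  have hM : IsMatching E M := isMatching_augment (isMatching_augment hm hP) hQ
  have hcov : ∀ x, (m x).isSome → (M x).isSome := fun x hx =>
    isSome_augment hQinj (isSome_augment hPinj hx)
  obtain ⟨hq0, hq0_ne⟩ := (augment_apply_eq_none_iff hP (qs 0)).1 hQ.1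
  obtain ⟨t, xs, zs, hX, hx0, hXM⟩ := exists_augPath_of_isSome hM hcov hq0
    (by simp [M, augment_apply_of_le hQinj k'.zero_le])
  obtain ⟨t₀, ys, zs₀, hY, hy0, hYM⟩ := exists_augPath_of_isSome hM hcov hP.1
    (isSome_augment hQinj (by simp [m', augment_apply_of_le hPinj k.zero_le]))
  have hk : k ≤ t₀ := hshortest _ _ _ hY
  -- `M` differs from `m` on two disjoint paths of `t + 1` and `t₀ + 1` left vertices, but only
  -- on the `k + 1` and `k' + 1` left vertices flipped by the two augmentations
  have hdisj : Disjoint ((range (t + 1)).image xs) ((range (t₀ + 1)).image ys) := by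
    simp only [disjoint_left, mem_image, mem_range, not_exists, not_and]
    rintro _ ⟨a, ha, rfl⟩ b hb
    exact (augPath_ne_of_zero_ne hM hX hXM hY hYM (by rw [hx0, hy0]; exact hq0_ne) a
      (by omega) b (by omega)).symm
  have hsub : (range (t + 1)).image xs ∪ (range (t₀ + 1)).image ys ⊆
      univ.filter fun x => M x ≠ m x := by
    simp only [subset_iff, mem_union, mem_image, mem_range, mem_filter, mem_univ, true_and]
    rintro _ (⟨a, ha, rfl⟩ | ⟨b, hb, rfl⟩)
    exacts [apply_ne_of_augPath hX hXM (by omega), apply_ne_of_augPath hY hYM (by omega)]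
  have hflip : univ.filter (fun x => M x ≠ m x) ⊆
      (univ.filter fun x => M x ≠ m' x) ∪ univ.filter fun x => m' x ≠ m x := by
    intro x
    simp only [mem_filter, mem_univ, true_and, mem_union]
    contrapose!
    exact fun h => h.1.trans h.2
  have hcard : (t + 1) + (t₀ + 1) ≤ (k' + 1) + (k + 1) := calc
    (t + 1) + (t₀ + 1) = #((range (t + 1)).image xs ∪ (range (t₀ + 1)).image ys) := by
      rw [card_union_of_disjoint hdisj, card_image_range_succ hX.2.2.2.2.1,
        card_image_range_succ hY.2.2.2.2.1]
    _ ≤ #(univ.filter fun x => M x ≠ m x) := card_le_card hsub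
    _ ≤ #(univ.filter fun x => M x ≠ m' x) + #(univ.filter fun x => m' x ≠ m x) :=
      (card_le_card hflip).trans (card_union_le _ _)
    _ ≤ (k' + 1) + (k + 1) := add_le_add (card_augment_ne_le _ _ _ _) (card_augment_ne_le _ _ _ _)
  exact ⟨t, by omega, xs, zs, hX, hx0⟩

def HasShortAugPaths (E : Fin N → Fin N → Prop) (L : ℕ) : Prop :=
  ∀ m, IsMatching E m → ¬(∀ u, (m u).isSome) → ∃ k ≤ L, ∃ u v, AugPath E m k u v

theorem exists_augPath_from {L : ℕ} (haug : HasShortAugPaths E L) (m : Fin N → Option (Fin N))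
    (hm : IsMatching E m) {u : Fin N} (hu : m u = none) :
    ∃ k ≤ L, ∃ us vs, AugPath E m k us vs ∧ us 0 = u := by
  classical
  obtain ⟨k, hkL, hex⟩ := haug m hm fun h => by simpa [hu] using h u
  have hex' : ∃ k us vs, AugPath E m k us vs := ⟨k, hex⟩
  obtain ⟨us, vs, hP⟩ := Nat.find_spec hex'
  have hshortest : ∀ t xs zs, AugPath E m t xs zs → Nat.find hex' ≤ t :=
    fun t xs zs h => Nat.find_min' hex' ⟨xs, zs, h⟩
  have hL : Nat.find hex' ≤ L := (Nat.find_min' hex' hex).trans hkL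
  by_cases hstart : us 0 = u
  · exact ⟨_, hL, us, vs, hP, hstart⟩
  obtain ⟨k', hk'L, qs, ws, hQ, hq0⟩ := exists_augPath_from haug _ (isMatching_augment hm hP)
    ((augment_apply_eq_none_iff hP u).2 ⟨hu, Ne.symm hstart⟩)
  obtain ⟨t, ht, xs, zs, hX, hx0⟩ := exists_augPath_le_of_augment hm hP hshortest hQ
  exact ⟨t, ht.trans hk'L, xs, zs, hX, hx0.trans hq0⟩
termination_by #(univ.filter fun x => m x = none)
decreasing_by exact card_free_augment_lt hP

structure Invariant (E : Fin N → Fin N → Prop) (s : FMState N) : Prop where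
  isMatching : IsMatching E s.matching
  exists_matching_eq_of_ne_zero : ∀ v, s.h v ≠ 0 → ∃ x, s.matching x = some v
  le_succ_of_adj : ∀ x v, s.matching x = some v → ∀ w, E x w → s.h v ≤ s.h w + 1

theorem invariant_init : Invariant E (FMInit N) :=
  ⟨⟨by simp [FMInit], by simp [FMInit]⟩, by simp [FMInit], by simp [FMInit]⟩

theorem Invariant.h_le_of_augPath {s : FMState N} (hs : Invariant E s) {k : ℕ} {us vs : ℕ → Fin N}
    (hP : AugPath E s.matching k us vs) : s.h (vs 0) ≤ k := by
  obtain ⟨-, hadj, hmatched, hfree, -⟩ := hP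
  suffices ∀ n i, i + n = k → s.h (vs i) ≤ n from this k 0 (zero_add k)
  intro n
  induction n with
  | zero =>
    rintro i hi
    obtain rfl : i = k := by omega
    by_contra h
    obtain ⟨x, hx⟩ := hs.exists_matching_eq_of_ne_zero (vs i) (by omega)
    exact hfree x hx
  | succ n ih =>
    rintro i rfl
    have hback := hs.le_succ_of_adj _ _ (hmatched i (by omega)) _ (hadj (i + 1) (by omega))
    have hnext := ih (i + 1) (by omega)
    omega

theorem Invariant.h_le_of_free_of_min {L : ℕ} (haug : HasShortAugPaths E L) {s : FMState N}
    (hs : Invariant E s) {u j : Fin N} (hu : s.matching u = none)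
    (hmin : ∀ k, E u k → s.h j ≤ s.h k) : s.h j ≤ L := by
  obtain ⟨k, hkL, us, vs, hP, rfl⟩ := exists_augPath_from haug _ hs.isMatching hu
  exact (hmin _ (hP.2.1 0 k.zero_le)).trans ((hs.h_le_of_augPath hP).trans hkL)

theorem matching_eq_some_iff_of_eq_ite {m m' : Fin N → Option (Fin N)} {u j : Fin N}
    (hm' : m' = fun u' => if u' = u then some j else if m u' = some j then none else m u')
    {x w : Fin N} : m' x = some w ↔ (x = u ∧ w = j) ∨ (x ≠ u ∧ w ≠ j ∧ m x = some w) := by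
  subst hm'
  by_cases hx : x = u
  · simp [hx, eq_comm]
  · by_cases hxj : m x = some j
    · simpa [hx, hxj] using fun (hwj : w ≠ j) => hwj.symm
    · simpa [hx, hxj] using fun (hxw : m x = some w) (hwj : w = j) => hxj (hwj ▸ hxw)

theorem isMatching_of_eq_ite {m m' : Fin N → Option (Fin N)} {u j : Fin N}
    (hm : IsMatching E m) (hj : E u j)
    (hm' : m' = fun u' => if u' = u then some j else if m u' = some j then none else m u') :
    IsMatching E m' := by
  refine ⟨fun x w hxw => ?_, fun x x' w hx hx' => ?_⟩
  · rcases (matching_eq_some_iff_of_eq_ite hm').1 hxw with ⟨rfl, rfl⟩ | ⟨-, -, hxw⟩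
    exacts [hj, hm.1 _ _ hxw]
  · rcases (matching_eq_some_iff_of_eq_ite hm').1 hx with ⟨rfl, rfl⟩ | ⟨-, hwj, hx⟩ <;>
      rcases (matching_eq_some_iff_of_eq_ite hm').1 hx' with ⟨rfl, hw⟩ | ⟨-, hwj', hx'⟩
    · rfl
    · exact absurd rfl hwj'
    · exact absurd hw hwj
    · exact hm.2 _ _ _ hx hx'

variable {s s' : FMState N}

theorem Invariant.of_step (hs : Invariant E s) (hstep : FMStep E s s') : Invariant E s' := by
  obtain ⟨u, j, hu, hj, hmin, hh, hm'⟩ := hstep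
  have hmono : ∀ v, s.h v ≤ s'.h v := fun v => by
    rcases eq_or_ne v j with rfl | hvj
    · simp [hh]
    · simp [hh, hvj]
  refine ⟨isMatching_of_eq_ite hs.isMatching hj hm', fun v hv => ?_, fun x v hxv w hxw => ?_⟩
  · rcases eq_or_ne v j with rfl | hvj
    · exact ⟨u, (matching_eq_some_iff_of_eq_ite hm').2 (.inl ⟨rfl, rfl⟩)⟩
    · rw [hh, Function.update_of_ne hvj] at hv
      obtain ⟨x, hx⟩ := hs.exists_matching_eq_of_ne_zero v hv
      have hxu : x ≠ u := by rintro rfl; simp [hu] at hx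
      exact ⟨x, (matching_eq_some_iff_of_eq_ite hm').2 (.inr ⟨hxu, hvj, hx⟩)⟩
  · rcases (matching_eq_some_iff_of_eq_ite hm').1 hxv with ⟨rfl, rfl⟩ | ⟨-, hvj, hxv⟩
    · calc s'.h v = s.h v + 1 := by rw [hh, Function.update_self]
        _ ≤ s'.h w + 1 := by gcongr; exact (hmin w hxw).trans (hmono w)
    · calc s'.h v = s.h v := by rw [hh, Function.update_of_ne hvj]
        _ ≤ s'.h w + 1 := (hs.le_succ_of_adj x v hxv w hxw).trans (by gcongr; exact hmono w)

theorem Invariant.h_le_succ_of_step {L : ℕ} (haug : HasShortAugPaths E L)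
    (hs : Invariant E s) (hbound : ∀ v, s.h v ≤ L + 1) (hstep : FMStep E s s') (v : Fin N) :
    s'.h v ≤ L + 1 := by
  obtain ⟨u, j, hu, -, hmin, hh, -⟩ := hstep
  rcases eq_or_ne v j with rfl | hvj
  · simpa [hh] using hs.h_le_of_free_of_min haug hu hmin
  · simpa [hh, hvj] using hbound v

theorem sum_h_of_step (hstep : FMStep E s s') : ∑ v, s'.h v = ∑ v, s.h v + 1 := by
  obtain ⟨u, j, -, -, -, hh, -⟩ := hstep
  rw [hh, sum_update_of_mem (mem_univ j), ← add_sum_erase _ _ (mem_univ j),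
    sdiff_singleton_eq_erase]
  ring

end FastMatching

theorem stmt14_general {N T : ℕ} (E : Fin N → Fin N → Prop) (L : ℕ)
    (haug : ∀ m, IsMatching E m → ¬(∀ u, (m u).isSome) →
      ∃ k ≤ L, ∃ u v, AugPath E m k u v)
    (run : ℕ → FMState N) (h0 : run 0 = FMInit N)
    (hstep : ∀ i < T, FMStep E (run i) (run (i + 1))) :
    T ≤ N * (L + 1) := by
  have hreach : ∀ i ≤ T, FastMatching.Invariant E (run i) ∧ (∀ v, (run i).h v ≤ L + 1) ∧
      ∑ v, (run i).h v = i := by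
    intro i
    induction i with
    | zero => exact fun _ => ⟨h0 ▸ FastMatching.invariant_init, by simp [h0, FMInit]⟩
    | succ i ih =>
      intro hi
      obtain ⟨hinv, hbound, hsum⟩ := ih (by omega)
      have hstep_i := hstep i hi
      exact ⟨hinv.of_step hstep_i, hinv.h_le_succ_of_step haug hbound hstep_i,
        by rw [FastMatching.sum_h_of_step hstep_i, hsum]⟩
  obtain ⟨-, hbound, hsum⟩ := hreach T le_rfl
  calc T = ∑ v, (run T).h v := hsum.symm
    _ ≤ ∑ _v : Fin N, (L + 1) := Finset.sum_le_sum fun v _ => hbound v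
    _ = N * (L + 1) := by simp

/-- If `G` contains a perfect matching and every non-perfect matching admits an
augmenting path of length at most `2L + 1`, then the fast matching algorithm terminates
within `N (L + 1)` iterations. -/
theorem stmt14 {N T : ℕ} (E : Fin N → Fin N → Prop) (L : ℕ)
    (hpm : ∃ m, IsMatching E m ∧ ∀ u, (m u).isSome)
    (haug : ∀ m, IsMatching E m → ¬(∀ u, (m u).isSome) →
      ∃ k ≤ L, ∃ u v, AugPath E m k u v)
    (run : ℕ → FMState N) (h0 : run 0 = FMInit N)
    (hstep : ∀ i < T, FMStep E (run i) (run (i + 1)))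
    (hrun : ∀ i < T, ¬ ∀ u, ((run i).matching u).isSome) :
    T ≤ N * (L + 1) :=
  stmt14_general E L haug run h0 hstep
end
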